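/- Let {S(t)}_{t≥0} be a multivalued eventual semiflow on X which is (X,Y)-dissipative with bounded set B₀ ∈ B(Y) and Y-asymptotically compact on B₀, and let A be its (X,Y)-global attractor. Assume in addition that for every t ≥ 0 the restriction S(t)|_Y is single-valued with S(t)Y ⊂ Y, the family {S(t)|_Y}_{t≥0} is a semigroup on Y, and each S(t)|_Y : Y → Y is continuous. Then for every v ∈ A and every t ∈ ℝ there exists an eternal Y-bounded (hence also X-bounded) trajectory u : ℝ → Y such that u(t) = v and u(s) ∈ A for every s ∈ ℝ. -/

import Mathlib

/-!
Uniform continuity of `T t` near the compact attractor `A` shows that `T t '' A` attracts every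
bounded set as well (this is where `S(t + s)B ⊆ S(t)S(s)B` enters), so minimality of the
attractor gives `A ⊆ T t '' A`. Conversely, for `w ∈ A` and every `r ≥ t` the point `T t w`
lies in `S(r)A`, hence in the closure of `A` because `A` attracts itself; so `T t '' A = A`.
An eternal trajectory through `v` is obtained by choosing a backward orbit of `v` under `T 1`
inside `A` and flowing it forward.
-/

open Set Filter Topology Bornology ENNReal

/-- The image of a set `B` under the multivalued map `S t`:
`S(t)B = ⋃_{v ∈ B} S(t)v`. -/
def mImage {X : Type*} (S : ℝ → X → Set X) (t : ℝ) (B : Set X) : Set X :=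
  ⋃ v ∈ B, S t v

/-- `S` is a multivalued eventual semiflow on the metric space `X`:
the values `S t v` (for `t ≥ 0`) are nonempty, `S 0 v = {v}`, and for every
nonempty bounded `B ⊆ X` there is `t₁(B) ≥ 0` such that
`S(s+t)B ⊆ S(s)S(t)B` for all `t ≥ t₁(B)`, `s ≥ 0`. -/
def IsEventualSemiflow {X : Type*} [MetricSpace X] (S : ℝ → X → Set X) : Prop :=
  (∀ t : ℝ, 0 ≤ t → ∀ v : X, (S t v).Nonempty) ∧
  (∀ v : X, S 0 v = {v}) ∧
  (∀ B : Set X, B.Nonempty → IsBounded B →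
    ∃ t₁ : ℝ, 0 ≤ t₁ ∧ ∀ t ≥ t₁, ∀ s ≥ (0 : ℝ),
      mImage S (s + t) B ⊆ mImage S s (mImage S t B))

/-- `(X,Y)`-dissipativity: `ι : Y → X` is the (continuous, injective) identification of
`Y` with a subset of `X`, and `B₀ ⊆ Y` is such that every nonempty bounded `B ⊆ X` is
eventually absorbed: there is `t₀(B) ≥ 0` with `S(t)B ⊆ ι''B₀` for all `t ≥ t₀(B)`. -/
def IsDissipativeInto {X Y : Type*} [MetricSpace X] [MetricSpace Y]
    (S : ℝ → X → Set X) (ι : Y → X) (B₀ : Set Y) : Prop :=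
  ∀ B : Set X, B.Nonempty → IsBounded B →
    ∃ t₀ : ℝ, 0 ≤ t₀ ∧ ∀ t ≥ t₀, mImage S t B ⊆ ι '' B₀

/-- `Y`-asymptotic compactness on `B₀`: whenever `tₙ → ∞` and `vₙ ∈ S(tₙ)B₀`, the
sequence `(vₙ)` has a subsequence which lies in `Y` and converges in `Y`. -/
def IsAsympCompactOn {X Y : Type*} [MetricSpace X] [MetricSpace Y]
    (S : ℝ → X → Set X) (ι : Y → X) (B₀ : Set Y) : Prop :=
  ∀ t : ℕ → ℝ, Tendsto t atTop atTop →
    ∀ v : ℕ → X, (∀ n, v n ∈ mImage S (t n) (ι '' B₀)) →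
      ∃ φ : ℕ → ℕ, StrictMono φ ∧ ∃ w : ℕ → Y, (∀ k, ι (w k) = v (φ k)) ∧
        ∃ y : Y, Tendsto w atTop (𝓝 y)

/-- The Hausdorff semidistance, measured in the metric of `Y`, from a set `C ⊆ X`
to a set `A ⊆ Y`.  A point `x ∈ C` which does not lie in (the image of) `Y`
contributes `∞`. -/
noncomputable def eSemidistY {X Y : Type*} [MetricSpace Y]
    (ι : Y → X) (C : Set X) (A : Set Y) : ℝ≥0∞ :=
  ⨆ x ∈ C, ⨅ y ∈ ι ⁻¹' {x}, EMetric.infEdist y A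

/-- `A ⊆ Y` attracts `B ⊆ X` : `dist_Y(S(t)B, A) → 0` as `t → ∞`. -/
def AttractsY {X Y : Type*} [MetricSpace X] [MetricSpace Y]
    (S : ℝ → X → Set X) (ι : Y → X) (A : Set Y) (B : Set X) : Prop :=
  Tendsto (fun t : ℝ => eSemidistY ι (mImage S t B) A) atTop (𝓝 0)

/-- `A ⊆ Y` is an `(X,Y)`-global attractor for `S`: it is nonempty, bounded and
compact in `Y`, it attracts every nonempty bounded subset of `X`, and it is
contained in every closed (in `Y`) set with this attraction property. -/
def IsGlobalAttractorXY {X Y : Type*} [MetricSpace X] [MetricSpace Y]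
    (S : ℝ → X → Set X) (ι : Y → X) (A : Set Y) : Prop :=
  A.Nonempty ∧ IsBounded A ∧ IsCompact A ∧
  (∀ B : Set X, B.Nonempty → IsBounded B → AttractsY S ι A B) ∧
  (∀ C : Set Y, IsClosed C →
    (∀ B : Set X, B.Nonempty → IsBounded B → AttractsY S ι C B) → A ⊆ C)

/-- The `ω`-limit set in `Y` of a set `B ⊆ X`, relative to a time `t₀ = t₀(B)`
after which `S(t)B ⊆ Y`: `ω_Y(B) = ⋂_{s ≥ t₀} cl_Y ( ⋃_{t ≥ s} S(t)B )`. -/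
def omegaY {X Y : Type*} [MetricSpace Y]
    (S : ℝ → X → Set X) (ι : Y → X) (B : Set X) (t₀ : ℝ) : Set Y :=
  ⋂ s ∈ Set.Ici t₀, closure (ι ⁻¹' (⋃ t ∈ Set.Ici s, mImage S t B))

/-- An eternal trajectory of the multivalued semiflow `S`:
`u(s) ∈ S(s - t)u(t)` for all `t ∈ ℝ`, `s > t`. -/
def IsEternalTrajectory {X : Type*} (S : ℝ → X → Set X) (u : ℝ → X) : Prop :=
  ∀ t s : ℝ, t < s → u s ∈ S (s - t) (u t)


open Metric

theorem IsCompact.exists_pos_forall_infEDist_image_lt {α β : Type*} [PseudoEMetricSpace α]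
    [PseudoEMetricSpace β] {K : Set α} (hK : IsCompact K) {f : α → β} (hf : Continuous f)
    {ε : ℝ≥0∞} (hε : 0 < ε) :
    ∃ δ > 0, ∀ x, infEDist x K < δ → infEDist (f x) (f '' K) < ε := by
  have hopen : IsOpen {x | infEDist (f x) (f '' K) < ε} :=
    isOpen_Iio.preimage (continuous_infEDist.comp hf)
  have hK_sub : K ⊆ {x | infEDist (f x) (f '' K) < ε} := fun x hx => by
    simpa [infEDist_zero_of_mem (mem_image_of_mem f hx)] using hε
  obtain ⟨δ, hδ, hthick⟩ := hK.exists_thickening_subset_open hopen hK_sub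
  exact ⟨ENNReal.ofReal δ, by simpa using hδ,
    fun x hx => hthick (mem_thickening_iff_infEDist_lt.mpr hx)⟩

section Semidistance

variable {X Y : Type*} [MetricSpace Y] {ι : Y → X} {C : Set X} {A : Set Y}

theorem exists_preimage_infEDist_lt_of_eSemidistY_lt {δ : ℝ≥0∞} (h : eSemidistY ι C A < δ)
    {x : X} (hx : x ∈ C) : ∃ y, ι y = x ∧ infEDist y A < δ := by
  have hlt : ⨅ y ∈ ι ⁻¹' {x}, infEDist y A < δ :=
    lt_of_le_of_lt (le_biSup (fun x => ⨅ y ∈ ι ⁻¹' {x}, infEDist y A) hx) h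
  simpa only [iInf_lt_iff, exists_prop, mem_preimage, mem_singleton_iff] using hlt

theorem eSemidistY_le_of_forall_exists {ε : ℝ≥0∞}
    (h : ∀ x ∈ C, ∃ y, ι y = x ∧ infEDist y A ≤ ε) : eSemidistY ι C A ≤ ε :=
  iSup₂_le fun x hx =>
    let ⟨y, hyx, hy⟩ := h x hx
    (iInf₂_le y hyx).trans hy

theorem infEDist_le_eSemidistY (hι : Function.Injective ι) {y : Y} (hy : ι y ∈ C) :
    infEDist y A ≤ eSemidistY ι C A :=
  (le_iInf₂ fun _ hy' => by rw [hι hy']).trans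
    (le_biSup (fun x => ⨅ y ∈ ι ⁻¹' {x}, infEDist y A) hy)

end Semidistance

section Attractor

variable {X Y : Type*} [MetricSpace X] [MetricSpace Y] {S : ℝ → X → Set X} {ι : Y → X}
  {A : Set Y} {B : Set X}

theorem AttractsY.image {t₀ : ℝ} {f : Y → Y} (hSf : ∀ y, S t₀ (ι y) ⊆ {ι (f y)})
    (hf : Continuous f) (hA : IsCompact A)
    (hshift : ∀ᶠ t in atTop, mImage S (t₀ + t) B ⊆ mImage S t₀ (mImage S t B))
    (hatt : AttractsY S ι A B) : AttractsY S ι (f '' A) B := by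
  refine ENNReal.tendsto_nhds_zero.mpr fun ε hε => ?_
  obtain ⟨δ, hδ, hfδ⟩ := hA.exists_pos_forall_infEDist_image_lt hf hε
  have hclose : ∀ᶠ t in atTop, mImage S (t₀ + t) B ⊆ mImage S t₀ (mImage S t B) ∧
      eSemidistY ι (mImage S t B) A < δ :=
    hshift.and (hatt.eventually (gt_mem_nhds hδ))
  have hsub : Tendsto (fun r : ℝ => r - t₀) atTop atTop :=
    tendsto_atTop_add_const_right _ _ tendsto_id
  filter_upwards [hsub.eventually hclose] with r ⟨hr_shift, hr_close⟩
  rw [add_sub_cancel] at hr_shift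
  refine eSemidistY_le_of_forall_exists fun x hx => ?_
  obtain ⟨z, hz, hxz⟩ := mem_iUnion₂.mp (hr_shift hx)
  obtain ⟨y, rfl, hy⟩ := exists_preimage_infEDist_lt_of_eSemidistY_lt hr_close hz
  exact ⟨f y, (hSf y hxz).symm, (hfδ y hy).le⟩

theorem AttractsY.mem_closure (hatt : AttractsY S ι A B) (hι : Function.Injective ι) {y : Y}
    (hy : ∀ᶠ r in atTop, ι y ∈ mImage S r B) : y ∈ closure A := by
  have hle : infEDist y A ≤ 0 :=
    ge_of_tendsto hatt (hy.mono fun _ hr => infEDist_le_eSemidistY hι hr)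
  exact mem_closure_iff_infEDist_zero.mpr (nonpos_iff_eq_zero.mp hle)

theorem IsGlobalAttractorXY.subset_image (hA : IsGlobalAttractorXY S ι A)
    (hS : IsEventualSemiflow S) {t₀ : ℝ} (ht₀ : 0 ≤ t₀) {f : Y → Y}
    (hSf : ∀ y, S t₀ (ι y) ⊆ {ι (f y)}) (hf : Continuous f) : A ⊆ f '' A := by
  obtain ⟨-, -, hAc, hAatt, hAmin⟩ := hA
  refine hAmin _ (hAc.image hf).isClosed fun B hB hBb => (hAatt B hB hBb).image hSf hf hAc ?_
  obtain ⟨t₁, -, ht₁⟩ := hS.2.2 B hB hBb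
  exact eventually_atTop.mpr ⟨t₁, fun t ht => ht₁ t ht t₀ ht₀⟩

theorem IsGlobalAttractorXY.mapsTo (hA : IsGlobalAttractorXY S ι A) (hι_cont : Continuous ι)
    (hι_inj : Function.Injective ι) {T : ℝ → Y → Y}
    (hST : ∀ t ≥ (0 : ℝ), ∀ y, ι (T t y) ∈ S t (ι y))
    (hTsemi : ∀ t ≥ (0 : ℝ), ∀ s ≥ (0 : ℝ), ∀ y, T (t + s) y = T t (T s y))
    (hsurj : ∀ t ≥ (0 : ℝ), A ⊆ T t '' A) {t₀ : ℝ} (ht₀ : 0 ≤ t₀) : MapsTo (T t₀) A A := by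
  intro w hw
  obtain ⟨hAne, -, hAc, hAatt, -⟩ := hA
  -- `T t₀ w = T r w'` for a preimage `w' ∈ A` of `w` under `T (r - t₀)`.
  have hreach : ∀ᶠ r in atTop, ι (T t₀ w) ∈ mImage S r (ι '' A) := by
    refine eventually_atTop.mpr ⟨t₀, fun r hr => ?_⟩
    obtain ⟨w', hw', rfl⟩ := hsurj (r - t₀) (sub_nonneg.2 hr) hw
    have hsplit : T r w' = T t₀ (T (r - t₀) w') := by
      rw [← hTsemi t₀ ht₀ (r - t₀) (sub_nonneg.2 hr), add_sub_cancel]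
    exact mem_iUnion₂.mpr ⟨ι w', mem_image_of_mem ι hw', hsplit ▸ hST r (ht₀.trans hr) w'⟩
  have hcl := (hAatt _ (hAne.image ι) (hAc.image hι_cont).isBounded).mem_closure hι_inj hreach
  rwa [hAc.isClosed.closure_eq] at hcl

end Attractor

section Orbit

variable {Y : Type*} {T : ℝ → Y → Y}

theorem exists_backward_orbit {f : Y → Y} {A : Set Y} (hA : A ⊆ f '' A) {v : Y} (hv : v ∈ A) :
    ∃ g : ℕ → Y, g 0 = v ∧ (∀ n, g n ∈ A) ∧ ∀ n, f (g (n + 1)) = g n := by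
  have hpre : ∀ y : A, ∃ z : A, f z = y := fun y =>
    let ⟨z, hz, hzy⟩ := hA y.2
    ⟨⟨z, hz⟩, hzy⟩
  choose F hF using hpre
  exact ⟨fun n => F^[n] ⟨v, hv⟩, rfl, fun n => (F^[n] ⟨v, hv⟩).2,
    fun n => by simp only [Function.iterate_succ_apply', hF]⟩

variable {g : ℕ → Y}

theorem flow_backward_orbit_add
    (hTsemi : ∀ t ≥ (0 : ℝ), ∀ s ≥ (0 : ℝ), ∀ y, T (t + s) y = T t (T s y))
    (hg : ∀ n, T 1 (g (n + 1)) = g n) {a : ℝ} {n : ℕ} (ha : 0 ≤ a + n) (k : ℕ) :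
    T (a + (n + k : ℕ)) (g (n + k)) = T (a + n) (g n) := by
  induction k with
  | zero => rfl
  | succ k ih =>
    have hk : 0 ≤ a + (n + k : ℕ) := by push_cast; linarith [(k.cast_nonneg : (0 : ℝ) ≤ k)]
    calc T (a + (n + (k + 1) : ℕ)) (g (n + (k + 1)))
        = T (a + (n + k : ℕ) + 1) (g (n + k + 1)) := by push_cast; ring_nf
      _ = T (a + (n + k : ℕ)) (g (n + k)) := by rw [hTsemi _ hk 1 zero_le_one, hg]
      _ = T (a + n) (g n) := ih

theorem flow_backward_orbit_eq
    (hTsemi : ∀ t ≥ (0 : ℝ), ∀ s ≥ (0 : ℝ), ∀ y, T (t + s) y = T t (T s y))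
    (hg : ∀ n, T 1 (g (n + 1)) = g n) {a : ℝ} {m₁ m₂ : ℕ} (h₁ : 0 ≤ a + m₁) (h₂ : 0 ≤ a + m₂) :
    T (a + m₁) (g m₁) = T (a + m₂) (g m₂) := by
  rcases le_total m₁ m₂ with h | h
  · obtain ⟨k, rfl⟩ := Nat.exists_eq_add_of_le h
    exact (flow_backward_orbit_add hTsemi hg h₁ k).symm
  · obtain ⟨k, rfl⟩ := Nat.exists_eq_add_of_le h
    exact flow_backward_orbit_add hTsemi hg h₂ k

theorem exists_trajectory_through
    (hTsemi : ∀ t ≥ (0 : ℝ), ∀ s ≥ (0 : ℝ), ∀ y, T (t + s) y = T t (T s y))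
    {A : Set Y} (hback : A ⊆ T 1 '' A) (hmaps : ∀ t ≥ (0 : ℝ), MapsTo (T t) A A)
    {v : Y} (hv : v ∈ A) (τ : ℝ) :
    ∃ u : ℝ → Y, u τ = v ∧ (∀ s, u s ∈ A) ∧ ∀ t s, t < s → u s = T (s - t) (u t) := by
  obtain ⟨g, hg0, hgA, hg⟩ := exists_backward_orbit hback hv
  have hstart : ∀ s : ℝ, 0 ≤ s - τ + (⌊τ - s⌋₊ + 1 : ℕ) := fun s => by
    have := Nat.lt_floor_add_one (τ - s); push_cast; linarith
  -- The index `⌊τ - s⌋₊ + 1` (not `⌈τ - s⌉₊`) gives `u τ = T 1 (g 1) = v` without `T 0 = id`.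
  set u : ℝ → Y := fun s => T (s - τ + (⌊τ - s⌋₊ + 1 : ℕ)) (g (⌊τ - s⌋₊ + 1))
  have hu : ∀ s (m : ℕ), τ - s ≤ m → u s = T (s - τ + m) (g m) := fun s m hm =>
    flow_backward_orbit_eq hTsemi hg (hstart s) (by linarith)
  refine ⟨u, ?_, fun s => hmaps _ (hstart s) (hgA _), fun t s hts => ?_⟩
  · rw [hu τ 1 (by simp), sub_self, zero_add, Nat.cast_one, ← hg0, ← hg 0]
  · have hm := hstart t
    rw [hu s _ (by linarith), hu t _ (by linarith),
      ← hTsemi (s - t) (by linarith) _ hm]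
    ring_nf

end Orbit

theorem eternal_trajectory_through_attractor_general
    {X Y : Type*} [MetricSpace X] [MetricSpace Y]
    (ι : Y → X) (hι_cont : Continuous ι) (hι_inj : Function.Injective ι)
    (S : ℝ → X → Set X) (hS : IsEventualSemiflow S)
    (A : Set Y) (hA : IsGlobalAttractorXY S ι A)
    (T : ℝ → Y → Y)
    (hT : ∀ t ≥ (0 : ℝ), ∀ y : Y, S t (ι y) = {ι (T t y)})
    (hTsemi : ∀ t ≥ (0 : ℝ), ∀ s ≥ (0 : ℝ), ∀ y : Y, T (t + s) y = T t (T s y))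
    (hTcont : ∀ t ≥ (0 : ℝ), Continuous (T t)) :
    ∀ v ∈ A, ∀ t : ℝ, ∃ u : ℝ → Y,
      IsEternalTrajectory S (ι ∘ u) ∧ u t = v ∧ (∀ s : ℝ, u s ∈ A) ∧
      IsBounded (Set.range u) ∧ IsBounded (Set.range (ι ∘ u)) := by
  intro v hv τ
  have hST : ∀ t ≥ (0 : ℝ), ∀ y, ι (T t y) ∈ S t (ι y) := fun t ht y => by
    rw [hT t ht y]; rfl
  have hsurj : ∀ t ≥ (0 : ℝ), A ⊆ T t '' A := fun t ht =>
    hA.subset_image hS ht (fun y => (hT t ht y).subset) (hTcont t ht)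
  have hmaps : ∀ t ≥ (0 : ℝ), MapsTo (T t) A A := fun t ht =>
    hA.mapsTo hι_cont hι_inj hST hTsemi hsurj ht
  obtain ⟨u, huτ, huA, hu⟩ := exists_trajectory_through hTsemi (hsurj 1 zero_le_one) hmaps hv τ
  obtain ⟨-, hAbdd, hAc, -, -⟩ := hA
  have hrange : range u ⊆ A := range_subset_iff.mpr huA
  refine ⟨u, fun t s hts => ?_, huτ, huA, hAbdd.subset hrange, ?_⟩
  · simpa only [Function.comp_apply, hu t s hts] using hST _ (sub_nonneg.2 hts.le) (u t)
  · rw [range_comp]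
    exact (hAc.image hι_cont).isBounded.subset (image_mono hrange)

/-- **Eternal trajectories through points of the attractor.**  Under the assumptions of
the invariance theorem, for every `v ∈ 𝓐` and every `t ∈ ℝ` there is an eternal
`Y`-bounded (hence also `X`-bounded) trajectory `u : ℝ → Y` with `u(t) = v` and
`u(s) ∈ 𝓐` for all `s ∈ ℝ`. -/
theorem eternal_trajectory_through_attractor
    {X Y : Type*} [MetricSpace X] [MetricSpace Y]
    (ι : Y → X) (hι_cont : Continuous ι) (hι_inj : Function.Injective ι)
    (S : ℝ → X → Set X) (hS : IsEventualSemiflow S)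
    (B₀ : Set Y) (hB₀ne : B₀.Nonempty) (hB₀bdd : IsBounded B₀)
    (hdiss : IsDissipativeInto S ι B₀)
    (hcomp : IsAsympCompactOn S ι B₀)
    (A : Set Y) (hA : IsGlobalAttractorXY S ι A)
    (T : ℝ → Y → Y)
    (hT : ∀ t ≥ (0 : ℝ), ∀ y : Y, S t (ι y) = {ι (T t y)})
    (hTsemi : ∀ t ≥ (0 : ℝ), ∀ s ≥ (0 : ℝ), ∀ y : Y, T (t + s) y = T t (T s y))
    (hTcont : ∀ t ≥ (0 : ℝ), Continuous (T t)) :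
    ∀ v ∈ A, ∀ t : ℝ, ∃ u : ℝ → Y,
      IsEternalTrajectory S (ι ∘ u) ∧ u t = v ∧ (∀ s : ℝ, u s ∈ A) ∧
      IsBounded (Set.range u) ∧ IsBounded (Set.range (ι ∘ u)) :=
  eternal_trajectory_through_attractor_general ι hι_cont hι_inj S hS A hA T hT hTsemi hTcont
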